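/- Let G and H be connected finite simple graphs of order n₁ ≥ 2 and n₂ ≥ 2, with maximum degrees Δ₁ and Δ₂, respectively. If Δ₁ = n₁ − 1 and Δ₂ = n₂ − 1, then ϖ(G + H) = ϖ(G) + ϖ(H) − 1. -/

import Mathlib

open SimpleGraph

/-- A vertex `w` strongly resolves the pair `u`, `v` if `v` lies on some shortest `u`–`w`
path or `u` lies on some shortest `v`–`w` path. -/
def StronglyResolves {V : Type*} (G : SimpleGraph V) (w u v : V) : Prop :=
  G.dist u w = G.dist u v + G.dist v w ∨ G.dist v w = G.dist v u + G.dist u w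

/-- `S` is a strong resolving set for `G` if every pair of distinct vertices is strongly
resolved by some vertex of `S`. -/
def IsStrongResolvingSet {V : Type*} (G : SimpleGraph V) (S : Set V) : Prop :=
  ∀ u v : V, u ≠ v → ∃ w ∈ S, StronglyResolves G w u v

/-- The strong metric dimension: the minimum cardinality of a strong resolving set. -/
noncomputable def strongDim {V : Type*} (G : SimpleGraph V) [Fintype V] : ℕ :=
  sInf {k | ∃ S : Finset V, IsStrongResolvingSet G ↑S ∧ S.card = k}

/-- The closed neighborhood of a vertex. -/
def closedNbhd {V : Type*} (G : SimpleGraph V) (v : V) : Set V :=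
  insert v (G.neighborSet v)

/-- A twin-free clique: a clique containing no pair of true twins. -/
def IsTwinFreeClique {V : Type*} (G : SimpleGraph V) (X : Finset V) : Prop :=
  G.IsClique ↑X ∧ ∀ u ∈ X, ∀ v ∈ X, u ≠ v → closedNbhd G u ≠ closedNbhd G v

/-- The twin-free clique number: maximum cardinality of a twin-free clique. -/
noncomputable def twinFreeCliqueNum {V : Type*} (G : SimpleGraph V) [Fintype V] : ℕ :=
  sSup {k | ∃ X : Finset V, IsTwinFreeClique G X ∧ X.card = k}

/-- Adjacency relation of the join of two graphs. -/
def joinAdj {V W : Type*} (G : SimpleGraph V) (H : SimpleGraph W) :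
    V ⊕ W → V ⊕ W → Prop
  | Sum.inl a, Sum.inl b => G.Adj a b
  | Sum.inr a, Sum.inr b => H.Adj a b
  | Sum.inl _, Sum.inr _ => True
  | Sum.inr _, Sum.inl _ => True

/-- The join `G + H`: disjoint union of `G` and `H` plus all edges between them. -/
def joinGraph {V W : Type*} (G : SimpleGraph V) (H : SimpleGraph W) :
    SimpleGraph (V ⊕ W) where
  Adj := joinAdj G H
  symm := by
    constructor
    rintro (a | a) (b | b) h
    · exact G.adj_symm h
    · trivial
    · trivial
    · exact H.adj_symm h
  loopless := by
    constructor
    rintro (a | a) h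
    · exact G.loopless.irrefl a h
    · exact H.loopless.irrefl a h

/-- Adjacency relation of the corona product `G ⊙ H`. -/
def coronaAdj {V W : Type*} (G : SimpleGraph V) (H : SimpleGraph W) :
    V ⊕ V × W → V ⊕ V × W → Prop
  | Sum.inl a, Sum.inl b => G.Adj a b
  | Sum.inr p, Sum.inr q => p.1 = q.1 ∧ H.Adj p.2 q.2
  | Sum.inl a, Sum.inr q => a = q.1
  | Sum.inr p, Sum.inl b => p.1 = b

/-- The corona product `G ⊙ H`: one copy of `G` and one copy of `H` for each vertex of
`G`, with the `i`-th vertex of `G` joined to every vertex of the `i`-th copy of `H`. -/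
def corona {V W : Type*} (G : SimpleGraph V) (H : SimpleGraph W) :
    SimpleGraph (V ⊕ V × W) where
  Adj := coronaAdj G H
  symm := by
    constructor
    rintro (a | p) (b | q) h
    · exact G.adj_symm h
    · exact h.symm
    · exact h.symm
    · exact ⟨h.1.symm, H.adj_symm h.2⟩
  loopless := by
    constructor
    rintro (a | p) h
    · exact G.loopless.irrefl a h
    · exact H.loopless.irrefl p.2 h.2

/-- The disjoint union of copies of `H`, one copy for each element of `V`. -/
def copies (V : Type*) {W : Type*} (H : SimpleGraph W) : SimpleGraph (V × W) where
  Adj p q := p.1 = q.1 ∧ H.Adj p.2 q.2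
  symm := ⟨fun _ _ h => ⟨h.1.symm, h.2.symm⟩⟩
  loopless := ⟨fun p h => H.loopless.irrefl p.2 h.2⟩

/-- The algebraic connectivity: the second smallest eigenvalue (with multiplicity,
in nondecreasing order) of the Laplacian matrix. -/
noncomputable def algebraicConnectivity {V : Type*} (G : SimpleGraph V) [Fintype V]
    [DecidableEq V] [DecidableRel G.Adj] : ℝ :=
  (((Finset.univ.val.map ((G.posSemidef_lapMatrix ℝ).isHermitian.eigenvalues)).sort
    (· ≤ ·)).getD 1 0)

/-! A universal vertex lies in every maximum twin-free clique (otherwise it could be added), and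
two universal vertices are twins. In `G + H`, two vertices on the same side are twins exactly
when they are twins in their own graph, while `inl a` and `inr b` are twins exactly when `a` and
`b` are both universal. So twin-free cliques of `G + H` are the pairs of twin-free cliques of `G`
and `H` that do not both contain a universal vertex; they have at most `ϖ(G) + ϖ(H) - 1`
vertices, and this is attained by a maximum one of `G` together with a maximum one of `H` minus
its universal vertex. -/

open Finset

section

variable {V W : Type*}

theorem closedNbhd_eq_univ_iff {G : SimpleGraph V} {v : V} :
    closedNbhd G v = Set.univ ↔ G.IsUniversal v :=
  insert_neighborSet_eq_univ

theorem SimpleGraph.exists_isUniversal_of_maxDegree_eq [Fintype V] [Nonempty V]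
    (G : SimpleGraph V) [DecidableRel G.Adj] (h : G.maxDegree = Fintype.card V - 1) :
    ∃ v, G.IsUniversal v := by
  obtain ⟨v, hv⟩ := G.exists_maximal_degree_vertex
  exact ⟨v, (G.degree_eq_card_sub_one v).1 (hv ▸ h)⟩

namespace IsTwinFreeClique

variable {G : SimpleGraph V} {X : Finset V}

theorem subset (hX : IsTwinFreeClique G X) {Y : Finset V} (hYX : Y ⊆ X) :
    IsTwinFreeClique G Y :=
  ⟨hX.1.subset (coe_subset.2 hYX), fun u hu v hv => hX.2 u (hYX hu) v (hYX hv)⟩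

theorem eq_of_isUniversal (hX : IsTwinFreeClique G X) {u v : V} (hu : u ∈ X) (hv : v ∈ X)
    (hu' : G.IsUniversal u) (hv' : G.IsUniversal v) : u = v := by
  by_contra huv
  exact hX.2 u hu v hv huv (by rw [closedNbhd_eq_univ_iff.2 hu', closedNbhd_eq_univ_iff.2 hv'])

theorem insert_of_isUniversal [DecidableEq V] (hX : IsTwinFreeClique G X) {u : V}
    (hu : G.IsUniversal u) (hXu : ∀ x ∈ X, ¬G.IsUniversal x) :
    IsTwinFreeClique G (insert u X) := by
  refine ⟨?_, ?_⟩
  · rw [coe_insert]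
    exact hX.1.insert fun x _ hux => hu hux
  · have hXu' : ∀ x ∈ X, closedNbhd G x ≠ closedNbhd G u := fun x hx h =>
      hXu x hx (closedNbhd_eq_univ_iff.1 (h.trans (closedNbhd_eq_univ_iff.2 hu)))
    simp only [mem_insert]
    rintro a (rfl | ha) b (rfl | hb) hab
    exacts [absurd rfl hab, (hXu' b hb).symm, hXu' a ha, hX.2 a ha b hb hab]

end IsTwinFreeClique

section Finite

variable [Fintype V] {G : SimpleGraph V}

theorem bddAbove_twinFreeCliqueCards (G : SimpleGraph V) :
    BddAbove {k | ∃ X : Finset V, IsTwinFreeClique G X ∧ #X = k} :=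
  ⟨Fintype.card V, by rintro _ ⟨X, -, rfl⟩; exact X.card_le_univ⟩

theorem IsTwinFreeClique.card_le_twinFreeCliqueNum {X : Finset V}
    (hX : IsTwinFreeClique G X) : #X ≤ twinFreeCliqueNum G :=
  le_csSup (bddAbove_twinFreeCliqueCards G) ⟨X, hX, rfl⟩

theorem exists_isTwinFreeClique_card_eq_twinFreeCliqueNum (G : SimpleGraph V) :
    ∃ X : Finset V, IsTwinFreeClique G X ∧ #X = twinFreeCliqueNum G := by
  refine Nat.sSup_mem ?_ (bddAbove_twinFreeCliqueCards G)
  exact ⟨0, ∅, ⟨by simp, by simp⟩, card_empty⟩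

theorem IsTwinFreeClique.exists_isUniversal_of_card_eq {X : Finset V}
    (hX : IsTwinFreeClique G X) (hcard : #X = twinFreeCliqueNum G) {u : V}
    (hu : G.IsUniversal u) : ∃ x ∈ X, G.IsUniversal x := by
  classical
  by_contra! hXu
  have huX : u ∉ X := fun h => hXu u h hu
  have := (hX.insert_of_isUniversal hu hXu).card_le_twinFreeCliqueNum
  rw [card_insert_of_notMem huX] at this
  omega

end Finite

theorem Set.eq_iff_preimage_inl_eq_and_preimage_inr_eq {s t : Set (V ⊕ W)} :
    s = t ↔ Sum.inl ⁻¹' s = Sum.inl ⁻¹' t ∧ Sum.inr ⁻¹' s = Sum.inr ⁻¹' t := by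
  refine ⟨by rintro rfl; simp, fun ⟨hl, hr⟩ => ?_⟩
  ext (x | x)
  exacts [Set.ext_iff.1 hl x, Set.ext_iff.1 hr x]

section Join

variable {G : SimpleGraph V} {H : SimpleGraph W}

@[simp] theorem joinGraph_adj_inl_inl {a a' : V} :
    (joinGraph G H).Adj (.inl a) (.inl a') ↔ G.Adj a a' := Iff.rfl

@[simp] theorem joinGraph_adj_inr_inr {b b' : W} :
    (joinGraph G H).Adj (.inr b) (.inr b') ↔ H.Adj b b' := Iff.rfl

@[simp] theorem joinGraph_adj_inl_inr (a : V) (b : W) :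
    (joinGraph G H).Adj (.inl a) (.inr b) := trivial

@[simp] theorem joinGraph_adj_inr_inl (b : W) (a : V) :
    (joinGraph G H).Adj (.inr b) (.inl a) := trivial

@[simp] theorem preimage_inl_closedNbhd_joinGraph_inl (a : V) :
    Sum.inl ⁻¹' closedNbhd (joinGraph G H) (.inl a) = closedNbhd G a := by
  ext; simp [closedNbhd]

@[simp] theorem preimage_inr_closedNbhd_joinGraph_inl (a : V) :
    Sum.inr ⁻¹' closedNbhd (joinGraph G H) (.inl a) = Set.univ := by
  ext; simp [closedNbhd]

@[simp] theorem preimage_inl_closedNbhd_joinGraph_inr (b : W) :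
    Sum.inl ⁻¹' closedNbhd (joinGraph G H) (.inr b) = Set.univ := by
  ext; simp [closedNbhd]

@[simp] theorem preimage_inr_closedNbhd_joinGraph_inr (b : W) :
    Sum.inr ⁻¹' closedNbhd (joinGraph G H) (.inr b) = closedNbhd H b := by
  ext; simp [closedNbhd]

theorem closedNbhd_joinGraph_inl_inj {a a' : V} :
    closedNbhd (joinGraph G H) (.inl a) = closedNbhd (joinGraph G H) (.inl a') ↔
      closedNbhd G a = closedNbhd G a' := by
  simp [Set.eq_iff_preimage_inl_eq_and_preimage_inr_eq]

theorem closedNbhd_joinGraph_inr_inj {b b' : W} :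
    closedNbhd (joinGraph G H) (.inr b) = closedNbhd (joinGraph G H) (.inr b') ↔
      closedNbhd H b = closedNbhd H b' := by
  simp [Set.eq_iff_preimage_inl_eq_and_preimage_inr_eq]

theorem closedNbhd_joinGraph_inl_eq_inr_iff {a : V} {b : W} :
    closedNbhd (joinGraph G H) (.inl a) = closedNbhd (joinGraph G H) (.inr b) ↔
      G.IsUniversal a ∧ H.IsUniversal b := by
  simp [Set.eq_iff_preimage_inl_eq_and_preimage_inr_eq, ← closedNbhd_eq_univ_iff, eq_comm]

theorem isTwinFreeClique_joinGraph_disjSum {A : Finset V} {B : Finset W} :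
    IsTwinFreeClique (joinGraph G H) (A.disjSum B) ↔
      IsTwinFreeClique G A ∧ IsTwinFreeClique H B ∧
        ∀ a ∈ A, ∀ b ∈ B, G.IsUniversal a → ¬H.IsUniversal b := by
  have hinr_inl {b : W} {a : V} :
      closedNbhd (joinGraph G H) (.inr b) = closedNbhd (joinGraph G H) (.inl a) ↔
        G.IsUniversal a ∧ H.IsUniversal b := eq_comm.trans closedNbhd_joinGraph_inl_eq_inr_iff
  simp only [IsTwinFreeClique, IsClique, Set.Pairwise, Sum.forall, mem_coe, inl_mem_disjSum,
    inr_mem_disjSum, ne_eq, Sum.inl.injEq, Sum.inr.injEq, reduceCtorEq, not_false_eq_true,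
    joinGraph_adj_inl_inl, joinGraph_adj_inr_inr, joinGraph_adj_inl_inr, joinGraph_adj_inr_inl,
    closedNbhd_joinGraph_inl_inj, closedNbhd_joinGraph_inr_inj,
    closedNbhd_joinGraph_inl_eq_inr_iff, hinr_inl, implies_true, and_true, true_and]
  grind

variable [Fintype V] [Fintype W]

theorem le_twinFreeCliqueNum_joinGraph {v : W} (hv : H.IsUniversal v) :
    twinFreeCliqueNum G + twinFreeCliqueNum H - 1 ≤ twinFreeCliqueNum (joinGraph G H) := by
  classical
  obtain ⟨A, hA, hAcard⟩ := exists_isTwinFreeClique_card_eq_twinFreeCliqueNum G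
  obtain ⟨B, hB, hBcard⟩ := exists_isTwinFreeClique_card_eq_twinFreeCliqueNum H
  obtain ⟨w, hwB, hw⟩ := hB.exists_isUniversal_of_card_eq hBcard hv
  have hAB : IsTwinFreeClique (joinGraph G H) (A.disjSum (B.erase w)) :=
    isTwinFreeClique_joinGraph_disjSum.2 ⟨hA, hB.subset (erase_subset w B), fun _ _ b hb _ hb' =>
      ne_of_mem_erase hb (hB.eq_of_isUniversal (mem_of_mem_erase hb) hwB hb' hw)⟩
  have := hAB.card_le_twinFreeCliqueNum
  rw [card_disjSum, card_erase_of_mem hwB] at this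
  omega

theorem twinFreeCliqueNum_joinGraph_le {u : V} {v : W} (hu : G.IsUniversal u)
    (hv : H.IsUniversal v) :
    twinFreeCliqueNum (joinGraph G H) ≤ twinFreeCliqueNum G + twinFreeCliqueNum H - 1 := by
  classical
  obtain ⟨Y, hY, hYcard⟩ := exists_isTwinFreeClique_card_eq_twinFreeCliqueNum (joinGraph G H)
  rw [← toLeft_disjSum_toRight (u := Y)] at hY
  obtain ⟨hA, hB, hAB⟩ := isTwinFreeClique_joinGraph_disjSum.1 hY
  have hA_le := hA.card_le_twinFreeCliqueNum
  have hB_le := hB.card_le_twinFreeCliqueNum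
  have : ¬(#Y.toLeft = twinFreeCliqueNum G ∧ #Y.toRight = twinFreeCliqueNum H) := by
    rintro ⟨hAcard, hBcard⟩
    obtain ⟨a, ha, ha'⟩ := hA.exists_isUniversal_of_card_eq hAcard hu
    obtain ⟨b, hb, hb'⟩ := hB.exists_isUniversal_of_card_eq hBcard hv
    exact hAB a ha b hb ha' hb'
  have := card_toLeft_add_card_toRight (u := Y)
  omega

theorem twinFreeCliqueNum_joinGraph_of_isUniversal {u : V} {v : W} (hu : G.IsUniversal u)
    (hv : H.IsUniversal v) :
    twinFreeCliqueNum (joinGraph G H) = twinFreeCliqueNum G + twinFreeCliqueNum H - 1 :=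
  (twinFreeCliqueNum_joinGraph_le hu hv).antisymm (le_twinFreeCliqueNum_joinGraph hv)

end Join

end

theorem twinFreeCliqueNum_join_of_dominant_general {V W : Type*} [Fintype V] [Fintype W]
    (G : SimpleGraph V) (H : SimpleGraph W) [DecidableRel G.Adj] [DecidableRel H.Adj]
    (hn1 : 2 ≤ Fintype.card V) (hn2 : 2 ≤ Fintype.card W)
    (hd1 : G.maxDegree = Fintype.card V - 1) (hd2 : H.maxDegree = Fintype.card W - 1) :
    twinFreeCliqueNum (joinGraph G H) = twinFreeCliqueNum G + twinFreeCliqueNum H - 1 := by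
  have : Nonempty V := Fintype.card_pos_iff.1 (by omega)
  have : Nonempty W := Fintype.card_pos_iff.1 (by omega)
  obtain ⟨u, hu⟩ := G.exists_isUniversal_of_maxDegree_eq hd1
  obtain ⟨v, hv⟩ := H.exists_isUniversal_of_maxDegree_eq hd2
  exact twinFreeCliqueNum_joinGraph_of_isUniversal hu hv

/-- If `G`, `H` are connected graphs of order `n₁, n₂ ≥ 2` with maximum
degrees `Δ₁ = n₁ − 1` and `Δ₂ = n₂ − 1`, then `ϖ(G + H) = ϖ(G) + ϖ(H) − 1`. -/
theorem twinFreeCliqueNum_join_of_dominant {V W : Type*} [Fintype V] [Fintype W]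
    (G : SimpleGraph V) (H : SimpleGraph W) [DecidableRel G.Adj] [DecidableRel H.Adj]
    (hG : G.Connected) (hH : H.Connected)
    (hn1 : 2 ≤ Fintype.card V) (hn2 : 2 ≤ Fintype.card W)
    (hd1 : G.maxDegree = Fintype.card V - 1) (hd2 : H.maxDegree = Fintype.card W - 1) :
    twinFreeCliqueNum (joinGraph G H) = twinFreeCliqueNum G + twinFreeCliqueNum H - 1 :=
  twinFreeCliqueNum_join_of_dominant_general G H hn1 hn2 hd1 hd2
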